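/- arXiv:2406.17622 — 3 statements merged into one kernel-verified Lean document; each statement's English description precedes it below -/
import Mathlib

section
/- Let d ≥ 1 and let P be a probability measure on the space Ω = [0,∞)^{ℤ^d×ℤ^d} of environments (with the product σ-algebra) such that: P is stationary and ergodic under the shifts τ_x; P-almost surely, ω_{x,y} = ω_{y,x} > 0 whenever |x−y| = 1, ω_{x,y} = 0 whenever |x−y| > 1 and x ≠ y, and π_ω(x) := ∑_{z∈ℤ^d} ω_{x,z} < ∞ for all x; and E_P[π_ω(0)] < ∞. Let R be the Markov kernel on Ω under which, from ω, one jumps to τ_z ω with probability ω_{0,z}/π_ω(0), and define Q by dQ/dP = π_ω(0)/E_P[π_ω(0)]. Then the environment chain with kernel R is ergodic under Q: every bounded measurable f : Ω → ℝ satisfying Rf = f Q-almost everywhere is Q-almost everywhere constant. -/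
open MeasureTheory
open scoped ENNReal NNReal Classical

noncomputable section

/-- The lattice `ℤ^d`. -/
abbrev Zd (d : ℕ) := Fin d → ℤ

/-- Euclidean norm of a lattice point. -/
def znorm {d : ℕ} (x : Zd d) : ℝ := Real.sqrt (∑ i, ((x i : ℝ)) ^ 2)

/-- The space of environments `[0,∞)^{ℤ^d × ℤ^d}` (with the product σ-algebra). -/
abbrev EnvC (d : ℕ) := (Zd d × Zd d) → ℝ≥0

/-- `π_ω(x) = ∑_z ω_{x,z}`, as an extended real. -/
def piC {d : ℕ} (ω : EnvC d) (x : Zd d) : ℝ≥0∞ := ∑' z : Zd d, (ω (x, z) : ℝ≥0∞)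

/-- Shift of the environment by `z ∈ ℤ^d` : `(τ_z ω)_{x,y} = ω_{x+z,y+z}`. -/
def shiftE {d : ℕ} (z : Zd d) (ω : EnvC d) : EnvC d := fun q => ω (q.1 + z, q.2 + z)

/-- Action `(Rf)(ω) = ∑_z (ω_{0,z}/π_ω(0)) f(τ_z ω)` of the environment kernel on functions. -/
def Rop {d : ℕ} (f : EnvC d → ℝ) (ω : EnvC d) : ℝ :=
  ∑' z : Zd d, ((ω (0, z) : ℝ) / (piC ω 0).toReal) * f (shiftE z ω)

/-!
Stationarity of `P` and the symmetry `ω_{z,0} = ω_{0,z}` make the chain reversible: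
`∫ ∑_z ω_{0,z} g(τ_z ω) dP = ∫ π_ω(0) g(ω) dP`. For a bounded harmonic `f`, the variance of
`f(τ_Z ω)` under the one-step law is `R(f²)(ω) - f(ω)²`; multiplying by `π_ω(0)` and integrating,
reversibility shows that the Dirichlet energy `∫ ∑_z ω_{0,z} (f(τ_z ω) - f(ω))² dP` vanishes.
Since the unit conductances are positive, `f` is invariant under the unit shifts, hence under all
shifts, and ergodicity of `P` makes it constant. As `π_ω(0) > 0` a.s., `P` and `Q` have the same
null sets.
-/

open Filter

variable {d : ℕ}

lemma shiftE_shiftE (x y : Zd d) (ω : EnvC d) : shiftE x (shiftE y ω) = shiftE (y + x) ω := by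
  funext q
  simp [shiftE, add_assoc, add_comm x y]

@[simp]
lemma shiftE_zero (ω : EnvC d) : shiftE 0 ω = ω := by
  funext q
  simp [shiftE]

lemma measurable_shiftE (z : Zd d) : Measurable (shiftE (d := d) z) :=
  measurable_pi_lambda _ fun _ => measurable_pi_apply _

lemma measurable_conductance (x y : Zd d) : Measurable fun ω : EnvC d => (ω (x, y) : ℝ≥0∞) :=
  (measurable_pi_apply (x, y)).coe_nnreal_ennreal

lemma measurable_piC (x : Zd d) : Measurable fun ω : EnvC d => piC ω x :=
  Measurable.tsum fun z => measurable_conductance x z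

lemma znorm_neg (x : Zd d) : znorm (-x) = znorm x := by
  simp [znorm]

lemma one_le_znorm {x : Zd d} (hx : x ≠ 0) : 1 ≤ znorm x := by
  obtain ⟨i, hi⟩ := Function.ne_iff.mp hx
  calc (1 : ℝ) ≤ |(x i : ℝ)| := by exact_mod_cast Int.one_le_abs hi
    _ = Real.sqrt ((x i : ℝ) ^ 2) := (Real.sqrt_sq_eq_abs _).symm
    _ ≤ znorm x := Real.sqrt_le_sqrt
        (Finset.single_le_sum (fun j _ => sq_nonneg (x j : ℝ)) (Finset.mem_univ i))

lemma znorm_single (i : Fin d) : znorm (Pi.single i 1 : Zd d) = 1 := by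
  simp [znorm, Pi.single_apply, apply_ite]

def IsNearestNeighbour (ω : EnvC d) : Prop :=
  ∀ x y : Zd d, (znorm (x - y) = 1 → ω (x, y) = ω (y, x) ∧ 0 < ω (x, y)) ∧
    (1 < znorm (x - y) → ω (x, y) = 0)

namespace IsNearestNeighbour

variable {ω : EnvC d}

lemma symm (h : IsNearestNeighbour ω) (x y : Zd d) : ω (x, y) = ω (y, x) := by
  by_cases hxy : x = y
  · rw [hxy]
  rcases (one_le_znorm (sub_ne_zero.mpr hxy)).eq_or_lt with h1 | h1
  · exact ((h x y).1 h1.symm).1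
  · have h1' : 1 < znorm (y - x) := by rwa [← neg_sub, znorm_neg]
    rw [(h x y).2 h1, (h y x).2 h1']

lemma pos_single (h : IsNearestNeighbour ω) (i : Fin d) : 0 < ω (0, Pi.single i 1) :=
  ((h 0 _).1 (by rw [zero_sub, znorm_neg, znorm_single])).2

lemma piC_ne_zero (h : IsNearestNeighbour ω) (hd : 1 ≤ d) : piC ω 0 ≠ 0 :=
  (lt_of_lt_of_le (by exact_mod_cast h.pos_single ⟨0, hd⟩) (ENNReal.le_tsum _)).ne'

end IsNearestNeighbour

/-- Reversibility of the environment chain. -/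
lemma lintegral_tsum_conductance_mul_shiftE {P : Measure (EnvC d)}
    (hstat : ∀ x : Zd d, P.map (shiftE x) = P)
    (hsymm : ∀ᵐ ω ∂P, ∀ z : Zd d, ω (z, 0) = ω (0, z))
    {g : EnvC d → ℝ≥0∞} (hg : Measurable g) :
    ∫⁻ ω, ∑' z : Zd d, (ω (0, z) : ℝ≥0∞) * g (shiftE z ω) ∂P = ∫⁻ ω, piC ω 0 * g ω ∂P := by
  have hterm (z : Zd d) : ∫⁻ ω, (ω (0, z) : ℝ≥0∞) * g (shiftE z ω) ∂P
      = ∫⁻ ω, (ω (0, -z) : ℝ≥0∞) * g ω ∂P :=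
    calc ∫⁻ ω, (ω (0, z) : ℝ≥0∞) * g (shiftE z ω) ∂P
        = ∫⁻ ω, (shiftE z ω (-z, 0) : ℝ≥0∞) * g (shiftE z ω) ∂P := by simp [shiftE]
      _ = ∫⁻ ω, (ω (-z, 0) : ℝ≥0∞) * g ω ∂P :=
          MeasurePreserving.lintegral_comp ⟨measurable_shiftE z, hstat z⟩
            ((measurable_conductance _ _).mul hg)
      _ = ∫⁻ ω, (ω (0, -z) : ℝ≥0∞) * g ω ∂P :=
          lintegral_congr_ae (by filter_upwards [hsymm] with ω hω; rw [hω])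
  rw [lintegral_tsum (f := fun z ω => (ω (0, z) : ℝ≥0∞) * g (shiftE z ω)) fun z =>
      ((measurable_conductance 0 z).mul (hg.comp (measurable_shiftE z))).aemeasurable,
    tsum_congr hterm, ← lintegral_tsum (f := fun z ω => (ω (0, -z) : ℝ≥0∞) * g ω) fun z =>
      ((measurable_conductance 0 (-z)).mul hg).aemeasurable]
  congr 1
  funext ω
  rw [ENNReal.tsum_mul_right, piC, ← (Equiv.neg (Zd d)).tsum_eq fun z => (ω (0, z) : ℝ≥0∞)]
  rfl

lemma tsum_mul_ofReal_sq_sub_add {ι : Type*} {w : ι → ℝ≥0∞} (hw : ∑' i, w i = 1)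
    {a : ι → ℝ} {M : ℝ} (ha : ∀ i, |a i| ≤ M) {b : ℝ} (hb : ∑' i, (w i).toReal * a i = b) :
    ∑' i, w i * ENNReal.ofReal ((a i - b) ^ 2) + ENNReal.ofReal (b ^ 2)
      = ∑' i, w i * ENNReal.ofReal (a i ^ 2) := by
  set p : ι → ℝ := fun i => (w i).toReal
  have hp0 (i : ι) : 0 ≤ p i := ENNReal.toReal_nonneg
  have hw_top (i : ι) : w i ≠ ∞ := ne_top_of_le_ne_top (by simp [hw]) (ENNReal.le_tsum i)
  have hp : HasSum p 1 := by
    simpa [p, ← ENNReal.tsum_toReal_eq hw_top, hw] using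
      ENNReal.hasSum_toReal (f := w) (by simp [hw])
  have summable_mul {c : ι → ℝ} {K : ℝ} (hc : ∀ i, |c i| ≤ K) : Summable fun i => p i * c i :=
    Summable.of_norm_bounded (hp.summable.mul_right K) fun i => by
      rw [Real.norm_eq_abs, abs_mul, abs_of_nonneg (hp0 i)]
      exact mul_le_mul_of_nonneg_left (hc i) (hp0 i)
  have tsum_ofReal {c : ι → ℝ} (hc : ∀ i, 0 ≤ c i) (hs : Summable fun i => p i * c i) :
      ∑' i, w i * ENNReal.ofReal (c i) = ENNReal.ofReal (∑' i, p i * c i) := by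
    rw [ENNReal.ofReal_tsum_of_nonneg (fun i => mul_nonneg (hp0 i) (hc i)) hs]
    refine tsum_congr fun i => ?_
    rw [ENNReal.ofReal_mul (hp0 i), ENNReal.ofReal_toReal (hw_top i)]
  have hpa : HasSum (fun i => p i * a i) b := hb ▸ (summable_mul ha).hasSum
  have hpa2 : Summable fun i => p i * a i ^ 2 :=
    summable_mul (K := M ^ 2) fun i => by
      rw [abs_pow]
      exact pow_le_pow_left₀ (abs_nonneg _) (ha i) 2
  have hvar : HasSum (fun i => p i * (a i - b) ^ 2) (∑' i, p i * a i ^ 2 - b ^ 2) := by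
    have expand : (fun i => p i * (a i - b) ^ 2)
        = fun i => p i * a i ^ 2 - 2 * b * (p i * a i) + b ^ 2 * p i := by
      funext i
      ring
    rw [expand, show ∑' i, p i * a i ^ 2 - b ^ 2 = ∑' i, p i * a i ^ 2 - 2 * b * b + b ^ 2 * 1 by
      ring]
    exact (hpa2.hasSum.sub (hpa.mul_left (2 * b))).add (hp.mul_left (b ^ 2))
  have hvar_nonneg : 0 ≤ ∑' i, p i * a i ^ 2 - b ^ 2 :=
    hvar.nonneg fun i => mul_nonneg (hp0 i) (sq_nonneg _)
  rw [tsum_ofReal (fun i => sq_nonneg _) hvar.summable, tsum_ofReal (fun i => sq_nonneg _) hpa2,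
    hvar.tsum_eq, ← ENNReal.ofReal_add hvar_nonneg (sq_nonneg b), sub_add_cancel]

def localEnergy (f : EnvC d → ℝ) (ω : EnvC d) : ℝ≥0∞ :=
  ∑' z : Zd d, (ω (0, z) : ℝ≥0∞) * ENNReal.ofReal ((f (shiftE z ω) - f ω) ^ 2)

lemma measurable_localEnergy {f : EnvC d → ℝ} (hf : Measurable f) :
    Measurable (localEnergy f) :=
  Measurable.tsum fun z => (measurable_conductance 0 z).mul
    (((hf.comp (measurable_shiftE z)).sub hf).pow_const 2).ennreal_ofReal

lemma localEnergy_add_of_Rop_eq {f : EnvC d → ℝ} {M : ℝ} (hM : ∀ ω, |f ω| ≤ M) {ω : EnvC d}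
    (hπ0 : piC ω 0 ≠ 0) (hπ : piC ω 0 ≠ ∞) (hR : Rop f ω = f ω) :
    localEnergy f ω + piC ω 0 * ENNReal.ofReal (f ω ^ 2)
      = ∑' z : Zd d, (ω (0, z) : ℝ≥0∞) * ENNReal.ofReal (f (shiftE z ω) ^ 2) := by
  have hw : ∑' z : Zd d, (ω (0, z) : ℝ≥0∞) / piC ω 0 = 1 := by
    simp only [div_eq_mul_inv]
    rw [ENNReal.tsum_mul_right, ← piC, ENNReal.mul_inv_cancel hπ0 hπ]
  have hb : ∑' z : Zd d, ((ω (0, z) : ℝ≥0∞) / piC ω 0).toReal * f (shiftE z ω) = f ω := by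
    simpa [Rop, ENNReal.toReal_div] using hR
  have weight_mul (c : Zd d → ℝ≥0∞) :
      piC ω 0 * ∑' z, (ω (0, z) : ℝ≥0∞) / piC ω 0 * c z = ∑' z, (ω (0, z) : ℝ≥0∞) * c z := by
    rw [← ENNReal.tsum_mul_left]
    refine tsum_congr fun z => ?_
    rw [← mul_assoc, ENNReal.mul_div_cancel hπ0 hπ]
  rw [localEnergy, ← weight_mul, ← weight_mul, ← mul_add,
    tsum_mul_ofReal_sq_sub_add hw (fun z => hM (shiftE z ω)) hb]

lemma ae_localEnergy_eq_zero {P : Measure (EnvC d)}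
    (hstat : ∀ x : Zd d, P.map (shiftE x) = P)
    (hsymm : ∀ᵐ ω ∂P, ∀ z : Zd d, ω (z, 0) = ω (0, z))
    (hπ : ∀ᵐ ω ∂P, piC ω 0 ≠ 0 ∧ piC ω 0 ≠ ∞) (hint : ∫⁻ ω, piC ω 0 ∂P < ∞)
    {f : EnvC d → ℝ} (hf : Measurable f) {M : ℝ} (hM : ∀ ω, |f ω| ≤ M)
    (hR : ∀ᵐ ω ∂P, Rop f ω = f ω) :
    ∀ᵐ ω ∂P, localEnergy f ω = 0 := by
  set g : EnvC d → ℝ≥0∞ := fun ω => ENNReal.ofReal (f ω ^ 2)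
  have hg : Measurable g := (hf.pow_const 2).ennreal_ofReal
  have hfin : ∫⁻ ω, piC ω 0 * g ω ∂P ≠ ∞ := by
    refine ne_top_of_le_ne_top (b := ∫⁻ ω, piC ω 0 * ENNReal.ofReal (M ^ 2) ∂P) ?_ ?_
    · rw [lintegral_mul_const _ (measurable_piC 0)]
      exact ENNReal.mul_ne_top hint.ne ENNReal.ofReal_ne_top
    · refine lintegral_mono fun ω => mul_le_mul_right (ENNReal.ofReal_le_ofReal ?_) _
      rw [← sq_abs]
      exact pow_le_pow_left₀ (abs_nonneg _) (hM ω) 2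
  have henergy : ∫⁻ ω, localEnergy f ω ∂P + ∫⁻ ω, piC ω 0 * g ω ∂P
      = 0 + ∫⁻ ω, piC ω 0 * g ω ∂P := by
    rw [zero_add, ← lintegral_add_left (measurable_localEnergy hf),
      ← lintegral_tsum_conductance_mul_shiftE hstat hsymm hg]
    refine lintegral_congr_ae ?_
    filter_upwards [hπ, hR] with ω hω hRω
    exact localEnergy_add_of_Rop_eq hM hω.1 hω.2 hRω
  exact (lintegral_eq_zero_iff (measurable_localEnergy hf)).mp
    ((ENNReal.add_left_inj hfin).mp henergy)

lemma shiftE_eq_of_localEnergy_eq_zero {f : EnvC d → ℝ} {ω : EnvC d}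
    (h : localEnergy f ω = 0) {z : Zd d} (hz : 0 < ω (0, z)) : f (shiftE z ω) = f ω := by
  have hterm := ENNReal.tsum_eq_zero.mp h z
  simpa [hz.ne', sub_eq_zero] using hterm

theorem periodic_of_forall_periodic_single {ι β : Type*} [Fintype ι] [DecidableEq ι]
    {g : (ι → ℤ) → β} (h : ∀ i, Function.Periodic g (Pi.single i 1)) (x : ι → ℤ) :
    Function.Periodic g x := by
  rw [← Finset.univ_sum_single x]
  refine Finset.sum_induction _ (Function.Periodic g) (fun _ _ => Function.Periodic.add_period)
    (fun y => by rw [add_zero]) fun i _ => ?_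
  simpa [← Pi.single_smul] using (h i).zsmul (x i)

lemma ae_forall_shiftE_eq {P : Measure (EnvC d)} (hstat : ∀ x : Zd d, P.map (shiftE x) = P)
    {f : EnvC d → ℝ} (h : ∀ᵐ ω ∂P, ∀ i, f (shiftE (Pi.single i 1) ω) = f ω) :
    ∀ᵐ ω ∂P, ∀ x : Zd d, f (shiftE x ω) = f ω := by
  have hshift (y : Zd d) : ∀ᵐ ω ∂P, ∀ i, f (shiftE (Pi.single i 1) (shiftE y ω)) = f (shiftE y ω) :=
    (MeasurePreserving.quasiMeasurePreserving ⟨measurable_shiftE y, hstat y⟩).ae h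
  filter_upwards [ae_all_iff.mpr hshift] with ω hω x
  have hper : Function.Periodic (fun y => f (shiftE y ω)) x :=
    periodic_of_forall_periodic_single (fun i y => by simpa [shiftE_shiftE] using hω y i) x
  simpa using hper 0

lemma exists_ae_eq_const_of_ae_shiftE_invariant {P : Measure (EnvC d)} [IsProbabilityMeasure P]
    (herg : ∀ A : Set (EnvC d), MeasurableSet A → (∀ x : Zd d, shiftE x ⁻¹' A = A) →
      P A = 0 ∨ P A = 1)
    {f : EnvC d → ℝ} (hf : Measurable f) (hinv : ∀ᵐ ω ∂P, ∀ x : Zd d, f (shiftE x ω) = f ω) :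
    ∃ c : ℝ, ∀ᵐ ω ∂P, f ω = c := by
  refine exists_eventuallyEq_const_of_forall_separating MeasurableSet fun U hU => ?_
  set A := ⋂ x : Zd d, shiftE x ⁻¹' (f ⁻¹' U)
  have hA : MeasurableSet A := MeasurableSet.iInter fun x => measurable_shiftE x (hf hU)
  have hA_inv (y : Zd d) : shiftE y ⁻¹' A = A := by
    ext ω
    simp only [A, Set.mem_preimage, Set.mem_iInter, shiftE_shiftE]
    exact ⟨fun h x => by simpa using h (-y + x), fun h x => h _⟩
  have hAU : ∀ᵐ ω ∂P, ω ∈ A ↔ f ω ∈ U := by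
    filter_upwards [hinv] with ω hω
    simp [A, hω]
  rcases herg A hA hA_inv with h0 | h1
  · right
    filter_upwards [measure_eq_zero_iff_ae_notMem.mp h0, hAU] with ω hω hωU
    rwa [← hωU]
  · left
    filter_upwards [(ae_mem_iff_measure_eq hA.nullMeasurableSet).mpr (by simpa using h1), hAU]
      with ω hω hωU
    rwa [← hωU]

theorem stmt1 (d : ℕ) (hd : 1 ≤ d) (P : Measure (EnvC d)) [IsProbabilityMeasure P]
    (hstat : ∀ x : Zd d, P.map (shiftE x) = P)
    (herg : ∀ A : Set (EnvC d), MeasurableSet A → (∀ x : Zd d, shiftE x ⁻¹' A = A) →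
      P A = 0 ∨ P A = 1)
    (hgood : ∀ᵐ ω ∂P,
      (∀ x y : Zd d, (znorm (x - y) = 1 → ω (x, y) = ω (y, x) ∧ 0 < ω (x, y)) ∧
        (1 < znorm (x - y) → ω (x, y) = 0)) ∧ ∀ x : Zd d, piC ω x < ∞)
    (hint : ∫⁻ ω, piC ω 0 ∂P < ∞) :
    let Q : Measure (EnvC d) := P.withDensity fun ω => piC ω 0 / ∫⁻ ω', piC ω' 0 ∂P
    ∀ f : EnvC d → ℝ, Measurable f → (∃ M : ℝ, ∀ ω, |f ω| ≤ M) →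
      (∀ᵐ ω ∂Q, Rop f ω = f ω) → ∃ c : ℝ, ∀ᵐ ω ∂Q, f ω = c := by
  intro Q f hf ⟨M, hM⟩ hR
  have hnn : ∀ᵐ ω ∂P, IsNearestNeighbour ω := hgood.mono fun ω h => h.1
  have hπ : ∀ᵐ ω ∂P, piC ω 0 ≠ 0 ∧ piC ω 0 ≠ ∞ :=
    hgood.mono fun ω h => ⟨IsNearestNeighbour.piC_ne_zero h.1 hd, (h.2 0).ne⟩
  have hQP : Q ≪ P := withDensity_absolutelyContinuous _ _
  have hPQ : P ≪ Q := withDensity_absolutelyContinuous'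
    ((measurable_piC 0).div_const _).aemeasurable
    (hπ.mono fun ω hω => by simp [ENNReal.div_eq_zero_iff, hω.1, hint.ne])
  have henergy := ae_localEnergy_eq_zero hstat (hnn.mono fun ω h z => h.symm z 0) hπ hint hf hM
    (hPQ.ae_le hR)
  have hunit : ∀ᵐ ω ∂P, ∀ i, f (shiftE (Pi.single i 1) ω) = f ω := by
    filter_upwards [henergy, hnn] with ω hω hωnn i
    exact shiftE_eq_of_localEnergy_eq_zero hω (hωnn.pos_single i)
  obtain ⟨c, hc⟩ :=
    exists_ae_eq_const_of_ae_shiftE_invariant herg hf (ae_forall_shiftE_eq hstat hunit)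
  exact ⟨c, hQP.ae_le hc⟩
end
end

section
/- For every d ≥ 1, every ρ : ℤ^d → [0,1), and all x, y ∈ ℤ^d, the Green's function of the trap walk with environment ρ coincides with that of the simple random walk: g^ρ(x,y) = g(x,y), as an equality in [0,∞]. -/
open MeasureTheory
open scoped ENNReal NNReal Classical

noncomputable section

/-- Matrix powers of a (sub-)stochastic kernel on `ℤ^d`, valued in `[0,∞]`. -/
def kpow {d : ℕ} (p : Zd d → Zd d → ℝ≥0∞) : ℕ → Zd d → Zd d → ℝ≥0∞
  | 0 => fun x y => if x = y then 1 else 0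
  | n + 1 => fun x y => ∑' z : Zd d, kpow p n x z * p z y

/-- Transition kernel of the trap walk with environment `ρ`. -/
def trapK {d : ℕ} (ρ : Zd d → ℝ) (x y : Zd d) : ℝ≥0∞ :=
  if x = y then ENNReal.ofReal (ρ x)
  else if znorm (x - y) = 1 then ENNReal.ofReal ((1 - ρ x) / (2 * d)) else 0

/-- Transition kernel of the simple random walk on `ℤ^d`. -/
def srwK (d : ℕ) (x y : Zd d) : ℝ≥0∞ :=
  if znorm (x - y) = 1 then (2 * (d : ℝ≥0∞))⁻¹ else 0

/-!
With `R = diag ρ` and `S = diag (1 - ρ)`, the trap kernel is `A = R + S P` for the simple random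
walk kernel `P`, so `I - A = S (I - P)` and formally `(I - A)⁻¹ = (I - P)⁻¹ S⁻¹`, which is the
claim. In `[0, ∞]` this is made rigorous by minimality: `∑ₙ Kⁿ(·, y)` is the least supersolution
of `h = δ_y + K h`, and the identity turns `g(·, y) / (1 - ρ y)` into a solution for `A` and
`g^ρ(·, y)` into a supersolution for `P` with source `δ_y / (1 - ρ y)`.
-/

theorem ENNReal.ofReal_add_ofReal_one_sub {t : ℝ} (h₀ : 0 ≤ t) (h₁ : t ≤ 1) :
    ENNReal.ofReal t + ENNReal.ofReal (1 - t) = 1 := by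
  rw [← ENNReal.ofReal_add h₀ (sub_nonneg.mpr h₁)]
  simp

/-- Pointwise form of `I - (R + S P) = S (I - P)`: a solution of `u = a + P u` solves
`u = S a + (R + S P) u`. -/
theorem ENNReal.add_add_mul_eq_of_eq_add {r s a b u : ℝ≥0∞} (hrs : r + s = 1)
    (hu : u = a + b) : s * a + (r * u + s * b) = u :=
  calc s * a + (r * u + s * b) = (r + s) * u := by rw [hu]; ring
    _ = u := by rw [hrs, one_mul]

/-- Converse of `ENNReal.add_add_mul_eq_of_eq_add`; only an inequality, since `u = ∞` is allowed. -/
theorem ENNReal.add_le_of_eq_add_add_mul {r s a b u : ℝ≥0∞} (hrs : r + s = 1) (hs : s ≠ 0)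
    (hu : u = s * a + (r * u + s * b)) : a + b ≤ u := by
  rcases eq_or_ne u ∞ with rfl | hu_top
  · exact le_top
  have hr_top : r * u ≠ ∞ := ENNReal.mul_ne_top (ne_top_of_le_ne_top one_ne_top
    (hrs ▸ le_self_add)) hu_top
  have hs_top : s ≠ ∞ := ne_top_of_le_ne_top one_ne_top (hrs ▸ le_add_self)
  have : r * u + s * u = r * u + s * (a + b) := by
    rw [← add_mul, hrs, one_mul, mul_add]
    nth_rewrite 1 [hu]
    ring
  exact ((ENNReal.mul_right_inj hs hs_top).mp ((ENNReal.add_right_inj hr_top).mp this)).ge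

section Kernel

variable {d : ℕ}

theorem kpow_succ' (p : Zd d → Zd d → ℝ≥0∞) (n : ℕ) (x y : Zd d) :
    kpow p (n + 1) x y = ∑' z, p x z * kpow p n z y := by
  induction n generalizing y with
  | zero =>
    show ∑' z, kpow p 0 x z * p z y = ∑' z, p x z * kpow p 0 z y
    rw [tsum_eq_single x fun z hz => by simp [kpow, Ne.symm hz],
      tsum_eq_single y fun z hz => by simp [kpow, hz]]
    simp [kpow]
  | succ n ih =>
    calc kpow p (n + 2) x y = ∑' z, (∑' w, p x w * kpow p n w z) * p z y := by
          simp only [kpow, ← ih]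
      _ = ∑' w, p x w * ∑' z, kpow p n w z * p z y := by
          simp only [← ENNReal.tsum_mul_right, ← ENNReal.tsum_mul_left, mul_assoc]
          exact ENNReal.tsum_comm
      _ = ∑' w, p x w * kpow p (n + 1) w y := rfl

theorem sum_range_succ_kpow (p : Zd d → Zd d → ℝ≥0∞) (N : ℕ) (x y : Zd d) :
    ∑ n ∈ Finset.range (N + 1), kpow p n x y
      = (if x = y then 1 else 0) + ∑' z, p x z * ∑ n ∈ Finset.range N, kpow p n z y := by
  rw [Finset.sum_range_succ', add_comm]
  simp only [kpow_succ', Finset.mul_sum]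
  rw [Summable.tsum_finsetSum fun _ _ => ENNReal.summable]
  rfl

theorem tsum_kpow_eq (p : Zd d → Zd d → ℝ≥0∞) (x y : Zd d) :
    ∑' n, kpow p n x y = (if x = y then 1 else 0) + ∑' z, p x z * ∑' n, kpow p n z y := by
  rw [tsum_eq_zero_add' ENNReal.summable]
  simp only [kpow_succ', ← ENNReal.tsum_mul_left]
  rw [ENNReal.tsum_comm]
  rfl

theorem tsum_kpow_mul_le_of_supersolution (p : Zd d → Zd d → ℝ≥0∞) (y : Zd d) (a : ℝ≥0∞)
    {h : Zd d → ℝ≥0∞} (hh : ∀ w, (if w = y then a else 0) + ∑' z, p w z * h z ≤ h w)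
    (x : Zd d) : (∑' n, kpow p n x y) * a ≤ h x := by
  have partial_le : ∀ N w, (∑ n ∈ Finset.range N, kpow p n w y) * a ≤ h w := by
    intro N
    induction N with
    | zero => simp
    | succ N ih =>
      intro w
      calc (∑ n ∈ Finset.range (N + 1), kpow p n w y) * a
          = (if w = y then a else 0)
              + ∑' z, p w z * ((∑ n ∈ Finset.range N, kpow p n z y) * a) := by
            simp only [sum_range_succ_kpow, add_mul, boole_mul, ← ENNReal.tsum_mul_right,
              mul_assoc]
        _ ≤ (if w = y then a else 0) + ∑' z, p w z * h z := by
            gcongr with z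
            exact ih z
        _ ≤ h w := hh w
  rw [ENNReal.tsum_eq_iSup_nat, ENNReal.iSup_mul]
  exact iSup_le fun N => partial_le N x

end Kernel

section Trap

variable {d : ℕ}

theorem trapK_eq_ite_add_mul_srwK (ρ : Zd d → ℝ) (x z : Zd d) :
    trapK ρ x z = (if x = z then ENNReal.ofReal (ρ x) else 0)
      + ENNReal.ofReal (1 - ρ x) * srwK d x z := by
  unfold trapK srwK
  by_cases hxz : x = z
  · simp [hxz, znorm]
  by_cases hnorm : znorm (x - z) = 1
  · have hd : (0 : ℝ) < 2 * d := by
      have : d ≠ 0 := by rintro rfl; exact hxz (Subsingleton.elim x z)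
      positivity
    rw [if_neg hxz, if_neg hxz, if_pos hnorm, if_pos hnorm, zero_add,
      ENNReal.ofReal_div_of_pos hd, div_eq_mul_inv, ENNReal.ofReal_mul zero_le_two,
      ENNReal.ofReal_ofNat, ENNReal.ofReal_natCast]
  · simp [hxz, hnorm]

theorem tsum_trapK_mul (ρ : Zd d → ℝ) (h : Zd d → ℝ≥0∞) (w : Zd d) :
    ∑' z, trapK ρ w z * h z
      = ENNReal.ofReal (ρ w) * h w + ENNReal.ofReal (1 - ρ w) * ∑' z, srwK d w z * h z := by
  simp only [trapK_eq_ite_add_mul_srwK, add_mul, ite_mul, zero_mul, mul_assoc]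
  rw [ENNReal.tsum_add, ENNReal.tsum_mul_left, tsum_ite_eq']

end Trap

section Environment

variable {d : ℕ} {ρ : Zd d → ℝ}

theorem ite_eq_ofReal_one_sub_mul_ite (w y : Zd d) (hy : ρ y < 1) :
    (if w = y then (1 : ℝ≥0∞) else 0)
      = ENNReal.ofReal (1 - ρ w) * if w = y then ENNReal.ofReal ((1 - ρ y)⁻¹) else 0 := by
  split_ifs with hwy
  · subst hwy
    have hpos : 0 < 1 - ρ w := sub_pos.mpr hy
    rw [ENNReal.ofReal_inv_of_pos hpos,
      ENNReal.mul_inv_cancel (ENNReal.ofReal_pos.mpr hpos).ne' ENNReal.ofReal_ne_top]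
  · rw [mul_zero]

theorem tsum_kpow_trapK_le (hρ : ∀ x, ρ x ∈ Set.Ico (0 : ℝ) 1) (x y : Zd d) :
    ∑' n, kpow (trapK ρ) n x y
      ≤ (∑' n, kpow (srwK d) n x y) * ENNReal.ofReal ((1 - ρ y)⁻¹) := by
  set c := ENNReal.ofReal ((1 - ρ y)⁻¹)
  have hsolution : ∀ w, (∑' n, kpow (srwK d) n w y) * c
      = (if w = y then c else 0) + ∑' z, srwK d w z * ((∑' n, kpow (srwK d) n z y) * c) := by
    intro w
    rw [tsum_kpow_eq (srwK d) w y, add_mul, boole_mul, ← ENNReal.tsum_mul_right]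
    simp only [mul_assoc]
  have hsuper : ∀ w, (if w = y then 1 else 0)
      + ∑' z, trapK ρ w z * ((∑' n, kpow (srwK d) n z y) * c)
      ≤ (∑' n, kpow (srwK d) n w y) * c := by
    intro w
    rw [tsum_trapK_mul, ite_eq_ofReal_one_sub_mul_ite w y (hρ y).2]
    exact (ENNReal.add_add_mul_eq_of_eq_add
      (ENNReal.ofReal_add_ofReal_one_sub (hρ w).1 (hρ w).2.le) (hsolution w)).le
  simpa using tsum_kpow_mul_le_of_supersolution (trapK ρ) y 1 hsuper x

theorem tsum_kpow_srwK_mul_le (hρ : ∀ x, ρ x ∈ Set.Ico (0 : ℝ) 1) (x y : Zd d) :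
    (∑' n, kpow (srwK d) n x y) * ENNReal.ofReal ((1 - ρ y)⁻¹)
      ≤ ∑' n, kpow (trapK ρ) n x y := by
  refine tsum_kpow_mul_le_of_supersolution (srwK d) y _
    (h := fun z => ∑' n, kpow (trapK ρ) n z y) (fun w => ?_) x
  refine ENNReal.add_le_of_eq_add_add_mul
    (ENNReal.ofReal_add_ofReal_one_sub (hρ w).1 (hρ w).2.le)
    (ENNReal.ofReal_pos.mpr (sub_pos.mpr (hρ w).2)).ne' ?_
  rw [← ite_eq_ofReal_one_sub_mul_ite w y (hρ y).2,
    ← tsum_trapK_mul ρ fun z => ∑' n, kpow (trapK ρ) n z y]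
  exact tsum_kpow_eq _ w y

end Environment

theorem stmt2_general (d : ℕ) (ρ : Zd d → ℝ) (hρ : ∀ x, ρ x ∈ Set.Ico (0 : ℝ) 1)
    (x y : Zd d) :
    ∑' n : ℕ, kpow (trapK ρ) n x y / ENNReal.ofReal ((1 - ρ y)⁻¹)
      = ∑' n : ℕ, kpow (srwK d) n x y := by
  have hc₀ : ENNReal.ofReal ((1 - ρ y)⁻¹) ≠ 0 :=
    (ENNReal.ofReal_pos.mpr (inv_pos.mpr (sub_pos.mpr (hρ y).2))).ne'
  simp only [div_eq_mul_inv, ENNReal.tsum_mul_right]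
  rw [le_antisymm (tsum_kpow_trapK_le hρ x y) (tsum_kpow_srwK_mul_le hρ x y), mul_assoc,
    ENNReal.mul_inv_cancel hc₀ ENNReal.ofReal_ne_top, mul_one]

theorem stmt2 (d : ℕ) (hd : 1 ≤ d) (ρ : Zd d → ℝ) (hρ : ∀ x, ρ x ∈ Set.Ico (0 : ℝ) 1)
    (x y : Zd d) :
    ∑' n : ℕ, kpow (trapK ρ) n x y / ENNReal.ofReal ((1 - ρ y)⁻¹)
      = ∑' n : ℕ, kpow (srwK d) n x y :=
  stmt2_general d ρ hρ x y
end
end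

section
/- Let d ∈ {1,2} and let P be a probability measure on conductance environments on ℤ^d such that sup over nearest-neighbor pairs x∼y of E_P[ω_{x,y}] is finite. Then for P-almost every ω, the Markov chain on ℤ^d with transition probabilities p_ω(x,y) = ω_{x,y}/π_ω(x), started at 0, is recurrent: it returns to 0 with probability one, i.e. the trajectory measure of the chain started at 0 assigns probability one to the event {∃ n ≥ 1 : X_n = 0}. -/
open MeasureTheory
open scoped ENNReal NNReal Classical

noncomputable section

/-- `ω` is a conductance environment: `ω_{x,y} = ω_{y,x} > 0` for `|x-y| = 1`,
and `ω_{x,y} = 0` otherwise. -/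
def IsCondEnv {d : ℕ} (ω : EnvC d) : Prop :=
  ∀ x y : Zd d, (znorm (x - y) = 1 → ω (x, y) = ω (y, x) ∧ 0 < ω (x, y)) ∧
    (znorm (x - y) ≠ 1 → ω (x, y) = 0)

/-- Transition probabilities `p_ω(x,y) = ω_{x,y}/π_ω(x)` of the walk in conductances `ω`. -/
def pC {d : ℕ} (ω : EnvC d) (x y : Zd d) : ℝ≥0∞ := (ω (x, y) : ℝ≥0∞) / piC ω x

/-- Probability, for the walk in environment `ω` started at `0`, of returning to `0`:
the sum over `n ≥ 0` of the probability that the first return occurs at time `n+1`,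
computed via the kernel killed upon entering `0`. -/
def returnProb {d : ℕ} (ω : EnvC d) : ℝ≥0∞ :=
  ∑' n : ℕ, ∑' z : Zd d,
    kpow (fun a b => if b = 0 then 0 else pC ω a b) n 0 z * pC ω z 0


/-!
Recurrence is read off the Dirichlet principle. If `h` is the probability of returning to `0`
before leaving a finite box, the function equal to `1` at `0`, to the hitting probabilities of
`0` inside the box and to `0` outside is harmonic off `0`, so by Green's identity its energy is
`2 π(0) (1 - h)`, and it minimises the energy `∑ ω_{xy} (f x - f y)²` among all `f` with the
same boundary values. For the profile `f_R x = 1 - H(min(|x|_∞, R)) / H(R)`, `H` the harmonic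
numbers, the gradient across an edge at distance `s` is `O(1 / (s H(R)))`, and in dimension
`≤ 2` the sphere of radius `s` has `O(s)` points, so the mean energy is
`O(sup E ω / H(R)) → 0`. By Fatou's lemma the energy then has `liminf 0` almost surely, which
forces the return probability to be `1`.
-/
open Filter Topology Finset

theorem MeasureTheory.ae_liminf_eq_zero_of_tendsto_lintegral {Ω : Type*} [MeasurableSpace Ω]
    {μ : Measure Ω} {F : ℕ → Ω → ℝ≥0∞} (hF : ∀ n, Measurable (F n))
    (h : Tendsto (fun n => ∫⁻ ω, F n ω ∂μ) atTop (𝓝 0)) :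
    ∀ᵐ ω ∂μ, liminf (fun n => F n ω) atTop = 0 :=
  (lintegral_eq_zero_iff (Measurable.liminf hF)).mp
    (le_antisymm ((lintegral_liminf_le hF).trans_eq h.liminf_eq) zero_le)

namespace RandomConductance

section DirichletForm

variable {α : Type*} (c : α → α → ℝ) (T : Finset α)

def dirichletForm (u v : α → ℝ) : ℝ :=
  ∑ x ∈ T, ∑ y ∈ T, c x y * (u x - u y) * (v x - v y)

def laplacian (u : α → ℝ) (x : α) : ℝ := ∑ y ∈ T, c x y * (u x - u y)

variable {c T}

lemma dirichletForm_eq_two_mul_sum_laplacian (hc : ∀ x y, c x y = c y x) (u v : α → ℝ) :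
    dirichletForm c T u v = 2 * ∑ x ∈ T, v x * laplacian c T u x := by
  have hswap : ∑ x ∈ T, ∑ y ∈ T, c x y * (u x - u y) * v y
      = -∑ x ∈ T, ∑ y ∈ T, c x y * (u x - u y) * v x := by
    rw [sum_comm, ← sum_neg_distrib]
    refine sum_congr rfl fun x _ => ?_
    rw [← sum_neg_distrib]
    exact sum_congr rfl fun y _ => by rw [hc]; ring
  calc dirichletForm c T u v
      = ∑ x ∈ T, ∑ y ∈ T, c x y * (u x - u y) * v x
        - ∑ x ∈ T, ∑ y ∈ T, c x y * (u x - u y) * v y := by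
        simp only [dirichletForm, ← sum_sub_distrib]
        exact sum_congr rfl fun x _ => sum_congr rfl fun y _ => by ring
    _ = 2 * ∑ x ∈ T, v x * laplacian c T u x := by
        simp only [hswap, laplacian, mul_sum, ← sum_add_distrib, sub_neg_eq_add]
        exact sum_congr rfl fun x _ => sum_congr rfl fun y _ => by ring

lemma dirichletForm_le_of_laplacian_eq_zero (hc : ∀ x y, c x y = c y x)
    (hc0 : ∀ x y, 0 ≤ c x y) {u f : α → ℝ}
    (hu : ∀ x ∈ T, f x ≠ u x → laplacian c T u x = 0) :
    dirichletForm c T u u ≤ dirichletForm c T f f := by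
  have hcross : dirichletForm c T u (f - u) = 0 := by
    rw [dirichletForm_eq_two_mul_sum_laplacian hc, sum_eq_zero, mul_zero]
    intro x hx
    by_cases h : f x = u x
    · simp [h]
    · rw [hu x hx h, mul_zero]
  have hrest : 0 ≤ dirichletForm c T (f - u) (f - u) :=
    sum_nonneg fun x _ => sum_nonneg fun y _ => by
      rw [mul_assoc]
      exact mul_nonneg (hc0 x y) (mul_self_nonneg _)
  have hexp : dirichletForm c T f f = dirichletForm c T u u + 2 * dirichletForm c T u (f - u)
      + dirichletForm c T (f - u) (f - u) := by
    simp only [dirichletForm, Pi.sub_apply, mul_sum, ← sum_add_distrib]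
    exact sum_congr rfl fun x _ => sum_congr rfl fun y _ => by ring
  linarith

end DirichletForm

variable {d : ℕ}

lemma znorm_sub_comm (x y : Zd d) : znorm (x - y) = znorm (y - x) := by
  simp only [znorm, Pi.sub_apply, Int.cast_sub]
  congr 1
  exact Finset.sum_congr rfl fun i _ => by ring

lemma znorm_single (i : Fin d) : znorm (Pi.single i 1 : Zd d) = 1 := by
  simp [znorm, Pi.single_apply, apply_ite]

lemma abs_le_one_of_znorm_eq_one {v : Zd d} (hv : znorm v = 1) (i : Fin d) : |v i| ≤ 1 := by
  rw [znorm, Real.sqrt_eq_one] at hv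
  have hi : ((v i : ℤ) : ℝ) ^ 2 ≤ 1 :=
    hv ▸ Finset.single_le_sum (fun j _ => sq_nonneg ((v j : ℤ) : ℝ)) (mem_univ i)
  exact sq_le_one_iff_abs_le_one _ |>.mp (by exact_mod_cast hi)

def nbr (x : Zd d) : Finset (Zd d) :=
  {y ∈ Fintype.piFinset fun i => Icc (x i - 1) (x i + 1) | znorm (x - y) = 1}

lemma mem_nbr {x y : Zd d} : y ∈ nbr x ↔ znorm (x - y) = 1 := by
  refine ⟨fun h => (mem_filter.mp h).2, fun h => mem_filter.mpr ⟨?_, h⟩⟩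
  refine Fintype.mem_piFinset.mpr fun i => mem_Icc.mpr ?_
  have := abs_le.mp (abs_le_one_of_znorm_eq_one h i)
  simp only [Pi.sub_apply] at this
  omega

lemma mem_nbr_comm {x y : Zd d} : y ∈ nbr x ↔ x ∈ nbr y := by
  rw [mem_nbr, mem_nbr, znorm_sub_comm]

lemma card_nbr_le (x : Zd d) : #(nbr x) ≤ 3 ^ d := by
  refine (card_filter_le _ _).trans_eq ?_
  simp [Fintype.card_piFinset, Int.card_Icc, show ∀ a : ℤ, a + 1 + 1 - (a - 1) = 3 by grind]

lemma add_single_mem_nbr (x : Zd d) (i : Fin d) : x + Pi.single i 1 ∈ nbr x := by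
  rw [mem_nbr, znorm_sub_comm, add_sub_cancel_left, znorm_single]

def supNorm (x : Zd d) : ℕ := univ.sup fun i => (x i).natAbs

lemma supNorm_le_iff {x : Zd d} {s : ℕ} : supNorm x ≤ s ↔ ∀ i, (x i).natAbs ≤ s := by
  simp [supNorm]

lemma natAbs_le_supNorm (x : Zd d) (i : Fin d) : (x i).natAbs ≤ supNorm x :=
  le_sup (f := fun i => (x i).natAbs) (mem_univ i)

@[simp] lemma supNorm_zero : supNorm (0 : Zd d) = 0 := by
  simp [supNorm]

lemma supNorm_le_succ_of_mem_nbr {x y : Zd d} (h : y ∈ nbr x) : supNorm y ≤ supNorm x + 1 := by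
  refine supNorm_le_iff.mpr fun i => ?_
  have hxy := abs_le.mp (abs_le_one_of_znorm_eq_one (mem_nbr.mp h) i)
  have hx := natAbs_le_supNorm x i
  simp only [Pi.sub_apply] at hxy
  omega

def cube (d s : ℕ) : Finset (Zd d) := Fintype.piFinset fun _ => Icc (-(s : ℤ)) s

lemma mem_cube {s : ℕ} {x : Zd d} : x ∈ cube d s ↔ supNorm x ≤ s := by
  rw [cube, Fintype.mem_piFinset, supNorm_le_iff]
  refine forall_congr' fun i => ?_
  rw [mem_Icc]
  omega

lemma card_cube (d s : ℕ) : #(cube d s) = (2 * s + 1) ^ d := by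
  simp only [cube, Fintype.card_piFinset, Int.card_Icc, prod_const, card_univ, Fintype.card_fin]
  congr
  omega

lemma zero_mem_cube (d s : ℕ) : (0 : Zd d) ∈ cube d s := by
  simp [mem_cube]

lemma nbr_subset_cube {s : ℕ} {x : Zd d} (hx : x ∈ cube d s) : nbr x ⊆ cube d (s + 1) :=
  fun _ hy => mem_cube.mpr ((supNorm_le_succ_of_mem_nbr hy).trans (by simpa [mem_cube] using hx))

lemma cube_mono {s t : ℕ} (h : s ≤ t) : cube d s ⊆ cube d t :=
  fun _ hx => mem_cube.mpr ((mem_cube.mp hx).trans h)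

lemma card_sphere_le (hd : d = 1 ∨ d = 2) (n s : ℕ) :
    #{x ∈ cube d n | supNorm x = s} ≤ 8 * (s + 1) := by
  obtain _ | s := s
  · calc #{x ∈ cube d n | supNorm x = 0} ≤ #(cube d 0) :=
          card_le_card fun x hx => mem_cube.mpr (mem_filter.mp hx).2.le
      _ ≤ 8 * (0 + 1) := by rw [card_cube]; simp
  · calc #{x ∈ cube d n | supNorm x = s + 1} ≤ #(cube d (s + 1) \ cube d s) :=
          card_le_card fun x hx => by
            rw [Finset.mem_sdiff, mem_cube, mem_cube, (mem_filter.mp hx).2]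
            omega
      _ = (2 * (s + 1) + 1) ^ d - (2 * s + 1) ^ d := by
          rw [card_sdiff_of_subset (cube_mono (by omega)), card_cube, card_cube]
      _ ≤ 8 * (s + 1 + 1) := by
          rw [Nat.sub_le_iff_le_add]
          rcases hd with rfl | rfl <;> ring_nf <;> omega

lemma harmonic_nonneg (n : ℕ) : (0 : ℝ) ≤ harmonic n := by
  unfold harmonic
  push_cast
  positivity

lemma tendsto_harmonic_atTop : Tendsto (fun n => (harmonic n : ℝ)) atTop atTop :=
  tendsto_atTop_mono log_add_one_le_harmonic
    (Real.tendsto_log_atTop.comp (tendsto_natCast_atTop_atTop.comp (tendsto_add_atTop_nat 1)))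

lemma sum_cube_inv_sq_le (hd : d = 1 ∨ d = 2) (n : ℕ) :
    ∑ x ∈ cube d n, ((supNorm x : ℝ) + 1)⁻¹ ^ 2 ≤ 8 * harmonic (n + 1) := by
  have hmaps : ∀ x ∈ cube d n, supNorm x ∈ range (n + 1) :=
    fun x hx => mem_range.mpr (Nat.lt_succ_of_le (mem_cube.mp hx))
  have hH : (8 * harmonic (n + 1) : ℝ) = ∑ s ∈ range (n + 1), 8 * ((s : ℝ) + 1)⁻¹ := by
    simp [harmonic, mul_sum]
  rw [← sum_fiberwise_of_maps_to hmaps, hH]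
  gcongr with s
  calc ∑ x ∈ cube d n with supNorm x = s, ((supNorm x : ℝ) + 1)⁻¹ ^ 2
      = #{x ∈ cube d n | supNorm x = s} * ((s : ℝ) + 1)⁻¹ ^ 2 := by
        rw [← nsmul_eq_mul, ← sum_const]
        exact sum_congr rfl fun x hx => by rw [(mem_filter.mp hx).2]
    _ ≤ (8 * ((s : ℝ) + 1)) * ((s : ℝ) + 1)⁻¹ ^ 2 := by
        gcongr
        exact_mod_cast card_sphere_le hd n s
    _ = 8 * ((s : ℝ) + 1)⁻¹ := by
        field_simp

/-- Discrete analogue of the logarithmic capacitor profile `1 - log |x| / log R`. -/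
def harmonicProfile (R : ℕ) (x : Zd d) : ℝ := 1 - harmonic (min (supNorm x) R) / harmonic R

lemma harmonicProfile_zero (R : ℕ) : harmonicProfile R (0 : Zd d) = 1 := by
  simp [harmonicProfile]

lemma harmonicProfile_eq_zero {R : ℕ} (hR : R ≠ 0) {x : Zd d} (hx : R ≤ supNorm x) :
    harmonicProfile R x = 0 := by
  have : (harmonic R : ℝ) ≠ 0 := by exact_mod_cast (harmonic_pos hR).ne'
  simp [harmonicProfile, min_eq_right hx, this]

lemma abs_harmonic_min_succ_sub_le (n R : ℕ) :
    |(harmonic (min (n + 1) R) : ℝ) - harmonic (min n R)| ≤ ((n : ℝ) + 1)⁻¹ := by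
  rcases lt_or_ge n R with h | h
  · rw [min_eq_left (by omega : n + 1 ≤ R), min_eq_left h.le, harmonic_succ]
    push_cast
    rw [add_sub_cancel_left, abs_of_pos (by positivity)]
  · rw [min_eq_right (by omega : R ≤ n + 1), min_eq_right h, sub_self, abs_zero]
    positivity

lemma abs_harmonicProfile_sub_le (R : ℕ) {x y : Zd d} (h : y ∈ nbr x) :
    |harmonicProfile R x - harmonicProfile R y|
      ≤ 2 * ((supNorm x : ℝ) + 1)⁻¹ / harmonic R := by
  have key : |(harmonic (min (supNorm y) R) : ℝ) - harmonic (min (supNorm x) R)|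
      ≤ 2 * ((supNorm x : ℝ) + 1)⁻¹ := by
    have hyx := supNorm_le_succ_of_mem_nbr h
    have hxy := supNorm_le_succ_of_mem_nbr (mem_nbr_comm.mp h)
    obtain hs | hs | hs : supNorm y = supNorm x + 1 ∨ supNorm y = supNorm x ∨
        supNorm x = supNorm y + 1 := by omega
    · rw [hs]
      refine (abs_harmonic_min_succ_sub_le _ R).trans ?_
      linarith [inv_nonneg.mpr (by positivity : (0 : ℝ) ≤ supNorm x + 1)]
    · rw [hs, sub_self, abs_zero]
      positivity
    · rw [hs, abs_sub_comm]
      refine (abs_harmonic_min_succ_sub_le _ R).trans ?_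
      push_cast
      field_simp
      linarith
  rw [harmonicProfile, harmonicProfile, sub_sub_sub_cancel_left, ← sub_div, abs_div,
    abs_of_nonneg (harmonic_nonneg R)]
  exact div_le_div_of_nonneg_right key (harmonic_nonneg R)

lemma sum_sum_nbr_sq_harmonicProfile_sub_le (hd : d = 1 ∨ d = 2) (R : ℕ) :
    ∑ x ∈ cube d (R + 1), ∑ y ∈ nbr x, (harmonicProfile R x - harmonicProfile R y) ^ 2
      ≤ 288 * (harmonic (R + 2) / harmonic R ^ 2) := by
  have hnbr (x : Zd d) : (#(nbr x) : ℝ) ≤ 9 := by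
    have : 3 ^ d ≤ 9 := by rcases hd with rfl | rfl <;> norm_num
    exact_mod_cast (card_nbr_le x).trans this
  calc ∑ x ∈ cube d (R + 1), ∑ y ∈ nbr x, (harmonicProfile R x - harmonicProfile R y) ^ 2
      ≤ ∑ x ∈ cube d (R + 1), ∑ _y ∈ nbr x,
          (2 * ((supNorm x : ℝ) + 1)⁻¹ / harmonic R) ^ 2 := by
        refine sum_le_sum fun x _ => sum_le_sum fun y hy => ?_
        have h := abs_le.mp (abs_harmonicProfile_sub_le R hy)
        exact sq_le_sq' h.1 h.2
    _ ≤ ∑ x ∈ cube d (R + 1), 9 * (2 * ((supNorm x : ℝ) + 1)⁻¹ / harmonic R) ^ 2 := by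
        gcongr with x
        rw [sum_const, nsmul_eq_mul]
        gcongr
        exact hnbr x
    _ = 36 / harmonic R ^ 2 * ∑ x ∈ cube d (R + 1), ((supNorm x : ℝ) + 1)⁻¹ ^ 2 := by
        rw [mul_sum]
        exact sum_congr rfl fun x _ => by ring
    _ ≤ 36 / harmonic R ^ 2 * (8 * harmonic (R + 2)) := by
        gcongr
        exact sum_cube_inv_sq_le hd (R + 1)
    _ = 288 * (harmonic (R + 2) / harmonic R ^ 2) := by ring

lemma tendsto_harmonic_add_two_div_sq :
    Tendsto (fun R => (harmonic (R + 2) : ℝ) / harmonic R ^ 2) atTop (𝓝 0) := by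
  have hinv := tendsto_inv_atTop_zero.comp tendsto_harmonic_atTop
  have hlim : Tendsto (fun R => (harmonic R : ℝ)⁻¹ + 2 * ((harmonic R : ℝ)⁻¹) ^ 2)
      atTop (𝓝 0) := by
    simpa using hinv.add ((hinv.pow 2).const_mul 2)
  refine squeeze_zero'
    (Eventually.of_forall fun R => div_nonneg (harmonic_nonneg (R + 2)) (sq_nonneg _)) ?_ hlim
  filter_upwards [eventually_ne_atTop 0] with R hR
  have hpos : (0 : ℝ) < harmonic R := by exact_mod_cast harmonic_pos hR
  have hstep : (harmonic (R + 2) : ℝ) ≤ harmonic R + 2 := by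
    rw [show R + 2 = R + 1 + 1 by rfl, harmonic_succ, harmonic_succ]
    push_cast
    have hR0 : (0 : ℝ) ≤ R := R.cast_nonneg
    have h1 : ((R : ℝ) + 1)⁻¹ ≤ 1 := inv_le_one_of_one_le₀ (by linarith)
    have h2 : ((R : ℝ) + 1 + 1)⁻¹ ≤ 1 := inv_le_one_of_one_le₀ (by linarith)
    linarith
  calc (harmonic (R + 2) : ℝ) / harmonic R ^ 2 ≤ (harmonic R + 2) / harmonic R ^ 2 := by
        gcongr
    _ = (harmonic R : ℝ)⁻¹ + 2 * ((harmonic R : ℝ)⁻¹) ^ 2 := by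
        field_simp

section Kernel

variable (p : Zd d → Zd d → ℝ≥0∞)

/-- Probability that the chain with kernel `p` started at `x` visits `0` at some time `n + 1`,
having stayed in `S` at the times `1, …, n`. -/
def hitProb (S : Set (Zd d)) (x : Zd d) : ℝ≥0∞ :=
  ∑' n, ∑' z, kpow (fun a => S.indicator (p a)) n x z * p z 0

def hitProbExt (S : Set (Zd d)) : Zd d → ℝ≥0∞ :=
  Function.update (S.indicator (hitProb p S)) 0 1

lemma returnProb_eq_hitProb (ω : EnvC d) : returnProb ω = hitProb (pC ω) {0}ᶜ 0 := by
  simp only [returnProb, hitProb]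
  congr! with n z
  simp [Set.indicator, ite_not]

variable {p}

lemma kpow_mono {q : Zd d → Zd d → ℝ≥0∞} (h : ∀ x y, p x y ≤ q x y) (n : ℕ)
    (x y : Zd d) :
    kpow p n x y ≤ kpow q n x y := by
  induction n generalizing y with
  | zero => exact le_rfl
  | succ n ih => exact ENNReal.tsum_le_tsum fun z => mul_le_mul' (ih z) (h z y)

variable (p) in
lemma kpow_succ' (n : ℕ) (x z : Zd d) : kpow p (n + 1) x z = ∑' y, p x y * kpow p n y z := by
  induction n generalizing z with
  | zero => simp [kpow]
  | succ n ih =>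
    calc kpow p (n + 2) x z = ∑' w, ∑' y, p x y * kpow p n y w * p w z := by
          simp only [kpow] at ih ⊢
          simp_rw [ih, ENNReal.tsum_mul_right]
      _ = ∑' y, p x y * kpow p (n + 1) y z := by
          rw [ENNReal.tsum_comm]
          simp_rw [mul_assoc, ENNReal.tsum_mul_left]
          rfl

variable (p) in
lemma hitProb_eq (S : Set (Zd d)) (x : Zd d) :
    hitProb p S x = p x 0 + ∑' y, S.indicator (p x) y * hitProb p S y := by
  set k := fun a => S.indicator (p a)
  rw [hitProb, tsum_eq_zero_add' ENNReal.summable]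
  congr 1
  · simp [kpow]
  · calc ∑' n, ∑' z, kpow k (n + 1) x z * p z 0
        = ∑' n, ∑' z, ∑' y, k x y * (kpow k n y z * p z 0) := by
          simp_rw [kpow_succ', ← ENNReal.tsum_mul_right, mul_assoc]
      _ = ∑' n, ∑' y, ∑' z, k x y * (kpow k n y z * p z 0) :=
          tsum_congr fun n => ENNReal.tsum_comm
      _ = ∑' y, k x y * hitProb p S y := by
          rw [ENNReal.tsum_comm]
          simp_rw [ENNReal.tsum_mul_left]
          rfl

lemma hitProb_mono {S S' : Set (Zd d)} (h : S ⊆ S') (x : Zd d) :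
    hitProb p S x ≤ hitProb p S' x :=
  ENNReal.tsum_le_tsum fun n => ENNReal.tsum_le_tsum fun z => mul_le_mul'
    (kpow_mono (fun _ _ => Set.indicator_le_indicator_of_subset h (fun _ => zero_le) _) n x z)
    le_rfl

lemma hitProb_le_one (hp : ∀ x, ∑' y, p x y ≤ 1) {S : Set (Zd d)} (h0 : (0 : Zd d) ∉ S)
    (x : Zd d) : hitProb p S x ≤ 1 := by
  set k := fun a => S.indicator (p a)
  have hrow (y : Zd d) : ∑' z, k y z + p y 0 ≤ 1 := by
    calc ∑' z, k y z + p y 0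
        = ∑' z, (k y z + (Pi.single 0 (p y 0) : Zd d → ℝ≥0∞) z) := by
          rw [ENNReal.tsum_add, tsum_pi_single]
      _ ≤ ∑' z, p y z := ENNReal.tsum_le_tsum fun z => by
          by_cases hz : z ∈ S
          · simp [k, hz, ne_of_mem_of_not_mem hz h0]
          · rcases eq_or_ne z 0 with rfl | hz0 <;> simp [k, *]
      _ ≤ 1 := hp y
  have hmass (n : ℕ) :
      ∑' z, kpow k n x z + ∑ m ∈ range n, ∑' z, kpow k m x z * p z 0 ≤ 1 := by
    induction n with
    | zero => simp [kpow]
    | succ n ih =>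
      have hstep : ∑' z, kpow k (n + 1) x z + ∑' z, kpow k n x z * p z 0
          ≤ ∑' y, kpow k n x y := by
        calc ∑' z, kpow k (n + 1) x z + ∑' z, kpow k n x z * p z 0
            = ∑' y, kpow k n x y * (∑' z, k y z + p y 0) := by
              simp only [kpow, mul_add, ENNReal.tsum_add, ← ENNReal.tsum_mul_left]
              congr 1
              exact ENNReal.tsum_comm
          _ ≤ ∑' y, kpow k n x y * 1 := by gcongr with y; exact hrow y
          _ = ∑' y, kpow k n x y := by simp
      calc _ = (∑' z, kpow k (n + 1) x z + ∑' z, kpow k n x z * p z 0)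
            + ∑ m ∈ range n, ∑' z, kpow k m x z * p z 0 := by
            rw [sum_range_succ]
            ring
        _ ≤ 1 := (add_le_add hstep le_rfl).trans ih
  rw [hitProb, ENNReal.tsum_eq_iSup_nat]
  exact iSup_le fun n => le_add_self.trans (hmass n)

lemma hitProb_eq_tsum_mul_hitProbExt {S : Set (Zd d)} (h0 : (0 : Zd d) ∉ S) (x : Zd d) :
    hitProb p S x = ∑' y, p x y * hitProbExt p S y := by
  have hterm (y : Zd d) : p x y * hitProbExt p S y
      = (Pi.single 0 (p x 0) : Zd d → ℝ≥0∞) y + S.indicator (p x) y * hitProb p S y := by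
    rcases eq_or_ne y 0 with rfl | hy
    · simp [hitProbExt, h0]
    · by_cases hyS : y ∈ S <;> simp [hitProbExt, hy, hyS]
  rw [tsum_congr hterm, ENNReal.tsum_add, tsum_pi_single, ← hitProb_eq]

lemma hitProbExt_le_one (hp : ∀ x, ∑' y, p x y ≤ 1) {S : Set (Zd d)} (h0 : (0 : Zd d) ∉ S)
    (x : Zd d) : hitProbExt p S x ≤ 1 := by
  rcases eq_or_ne x 0 with rfl | hx
  · simp [hitProbExt]
  · by_cases hxS : x ∈ S <;> simp [hitProbExt, hx, hxS, hitProb_le_one hp h0]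

end Kernel

section Environment

variable {ω : EnvC d} (hω : IsCondEnv ω)
include hω

lemma omega_eq_zero_of_notMem_nbr {x y : Zd d} (h : y ∉ nbr x) : ω (x, y) = 0 :=
  (hω x y).2 fun h' => h (mem_nbr.mpr h')

lemma omega_symm (x y : Zd d) : ω (x, y) = ω (y, x) := by
  by_cases h : y ∈ nbr x
  · exact ((hω x y).1 (mem_nbr.mp h)).1
  · rw [omega_eq_zero_of_notMem_nbr hω h, omega_eq_zero_of_notMem_nbr hω (mt mem_nbr_comm.mpr h)]

lemma piC_eq_sum_of_nbr_subset {x : Zd d} {T : Finset (Zd d)} (hT : nbr x ⊆ T) :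
    piC ω x = ∑ y ∈ T, (ω (x, y) : ℝ≥0∞) :=
  tsum_eq_sum fun y hy => by
    rw [omega_eq_zero_of_notMem_nbr hω fun h => hy (hT h), ENNReal.coe_zero]

lemma piC_ne_top (x : Zd d) : piC ω x ≠ ∞ := by
  rw [piC_eq_sum_of_nbr_subset hω subset_rfl]
  exact ENNReal.sum_ne_top.mpr fun _ _ => ENNReal.coe_ne_top

lemma piC_pos (hd : 0 < d) (x : Zd d) : 0 < piC ω x := by
  have hy := add_single_mem_nbr x ⟨0, hd⟩
  calc (0 : ℝ≥0∞) < ω (x, x + Pi.single ⟨0, hd⟩ 1) :=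
        ENNReal.coe_pos.mpr ((hω _ _).1 (mem_nbr.mp hy)).2
    _ ≤ piC ω x := ENNReal.le_tsum _

lemma piC_mul_pC (hd : 0 < d) (x y : Zd d) : piC ω x * pC ω x y = ω (x, y) :=
  ENNReal.mul_div_cancel (piC_pos hω hd x).ne' (piC_ne_top hω x)

lemma tsum_pC (hd : 0 < d) (x : Zd d) : ∑' y, pC ω x y = 1 := by
  simp only [pC, div_eq_mul_inv, ENNReal.tsum_mul_right]
  exact ENNReal.mul_inv_cancel (piC_pos hω hd x).ne' (piC_ne_top hω x)

lemma returnProb_le_one (hd : 0 < d) : returnProb ω ≤ 1 :=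
  returnProb_eq_hitProb ω ▸
    hitProb_le_one (fun x => (tsum_pC hω hd x).le) (by simp) 0

end Environment

section Escape

variable {ω : EnvC d}

def weight (ω : EnvC d) (x y : Zd d) : ℝ := ω (x, y)

def energy (ω : EnvC d) (T : Finset (Zd d)) (f : Zd d → ℝ) : ℝ≥0∞ :=
  ∑ x ∈ T, ∑ y ∈ T, (ω (x, y) : ℝ≥0∞) * ENNReal.ofReal ((f x - f y) ^ 2)

lemma energy_ne_top (T : Finset (Zd d)) (f : Zd d → ℝ) : energy ω T f ≠ ∞ :=
  ENNReal.sum_ne_top.mpr fun _ _ => ENNReal.sum_ne_top.mpr fun _ _ =>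
    ENNReal.mul_ne_top ENNReal.coe_ne_top ENNReal.ofReal_ne_top

lemma energy_toReal (T : Finset (Zd d)) (f : Zd d → ℝ) :
    (energy ω T f).toReal = dirichletForm (weight ω) T f f := by
  rw [energy, ENNReal.toReal_sum fun _ _ => ENNReal.sum_ne_top.mpr fun _ _ =>
    ENNReal.mul_ne_top ENNReal.coe_ne_top ENNReal.ofReal_ne_top]
  refine sum_congr rfl fun x _ => ?_
  rw [ENNReal.toReal_sum fun _ _ => ENNReal.mul_ne_top ENNReal.coe_ne_top ENNReal.ofReal_ne_top]
  refine sum_congr rfl fun y _ => ?_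
  rw [ENNReal.toReal_mul, ENNReal.toReal_ofReal (sq_nonneg _), weight, ENNReal.coe_toReal]
  ring

variable (hω : IsCondEnv ω) (hd : 0 < d)
include hω hd

lemma laplacian_hitProbExt {A : Set (Zd d)} (h0A : (0 : Zd d) ∉ A) {T : Finset (Zd d)}
    {x : Zd d} (hx : nbr x ⊆ T) :
    laplacian (weight ω) T (fun y => (hitProbExt (pC ω) A y).toReal) x
      = (piC ω x).toReal * ((hitProbExt (pC ω) A x).toReal - (hitProb (pC ω) A x).toReal) := by
  have hp : ∀ x, ∑' y, pC ω x y ≤ 1 := fun x => (tsum_pC hω hd x).le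
  have hext_ne_top (y : Zd d) : hitProbExt (pC ω) A y ≠ ∞ :=
    ne_top_of_le_ne_top ENNReal.one_ne_top (hitProbExt_le_one hp h0A y)
  have hmean :
      piC ω x * hitProb (pC ω) A x = ∑ y ∈ T, ω (x, y) * hitProbExt (pC ω) A y := by
    rw [hitProb_eq_tsum_mul_hitProbExt h0A, ← ENNReal.tsum_mul_left]
    refine (tsum_eq_sum fun y hy => ?_).trans (sum_congr rfl fun y _ => ?_)
    · rw [← mul_assoc, piC_mul_pC hω hd,
        omega_eq_zero_of_notMem_nbr hω fun h => hy (hx h), ENNReal.coe_zero, zero_mul]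
    · rw [← mul_assoc, piC_mul_pC hω hd]
  have hmean' : (piC ω x).toReal * (hitProb (pC ω) A x).toReal
      = ∑ y ∈ T, weight ω x y * (hitProbExt (pC ω) A y).toReal := by
    rw [← ENNReal.toReal_mul, hmean, ENNReal.toReal_sum fun y _ =>
      ENNReal.mul_ne_top ENNReal.coe_ne_top (hext_ne_top y)]
    simp only [ENNReal.toReal_mul, ENNReal.coe_toReal, weight]
  have hpi : (piC ω x).toReal = ∑ y ∈ T, weight ω x y := by
    rw [piC_eq_sum_of_nbr_subset hω hx, ENNReal.toReal_sum fun _ _ => ENNReal.coe_ne_top]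
    rfl
  simp only [laplacian, mul_sub, sum_sub_distrib, ← sum_mul, ← hpi, ← hmean']

lemma two_mul_piC_mul_sub_hitProb_le_dirichletForm {A T : Finset (Zd d)} (h0A : (0 : Zd d) ∉ A)
    (h0T : (0 : Zd d) ∈ T) (hT : ∀ x ∈ insert 0 A, nbr x ⊆ T) {f : Zd d → ℝ}
    (hf0 : f 0 = 1) (hf : ∀ x ∉ insert 0 A, f x = 0) :
    2 * (piC ω 0).toReal * (1 - (hitProb (pC ω) A 0).toReal)
      ≤ dirichletForm (weight ω) T f f := by
  have h0A' : (0 : Zd d) ∉ (A : Set (Zd d)) := by simpa using h0A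
  set u := fun y => (hitProbExt (pC ω) A y).toReal
  have hu0 : u 0 = 1 := by simp [u, hitProbExt]
  have hu_out (x) (hx : x ∉ insert 0 A) : u x = 0 := by
    simp only [mem_insert, not_or] at hx
    simp [u, hitProbExt, hx.1, hx.2]
  have hlapA (x) (hx : x ∈ A) : laplacian (weight ω) T u x = 0 := by
    rw [laplacian_hitProbExt hω hd h0A' (hT x (mem_insert_of_mem hx))]
    simp [hitProbExt, ne_of_mem_of_not_mem hx h0A, hx]
  have hsymm (x y : Zd d) : weight ω x y = weight ω y x := by
    simp only [weight, omega_symm hω x y]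
  -- Green's identity: of the points where `f` may differ from `u`, only `0` is not harmonic.
  have hu : dirichletForm (weight ω) T u u
      = 2 * (piC ω 0).toReal * (1 - (hitProb (pC ω) A 0).toReal) := by
    rw [dirichletForm_eq_two_mul_sum_laplacian hsymm, sum_eq_single_of_mem 0 h0T fun x _ hx0 => ?_,
      laplacian_hitProbExt hω hd h0A' (hT 0 (mem_insert_self 0 A))]
    · simp only [u] at hu0 ⊢
      rw [hu0]
      ring
    · by_cases hxA : x ∈ A
      · rw [hlapA x hxA, mul_zero]
      · rw [hu_out x (by simp [hx0, hxA]), zero_mul]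
  refine hu ▸ dirichletForm_le_of_laplacian_eq_zero hsymm (fun x y => (ω (x, y)).coe_nonneg)
    fun x _ hne => ?_
  by_cases hx : x ∈ insert 0 A
  · rcases mem_insert.mp hx with rfl | hxA
    · exact absurd (hf0.trans hu0.symm) hne
    · exact hlapA x hxA
  · exact absurd ((hf x hx).trans (hu_out x hx).symm) hne

lemma two_mul_piC_mul_sub_returnProb_le_energy {A T : Finset (Zd d)} (h0A : (0 : Zd d) ∉ A)
    (h0T : (0 : Zd d) ∈ T) (hT : ∀ x ∈ insert 0 A, nbr x ⊆ T) {f : Zd d → ℝ}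
    (hf0 : f 0 = 1) (hf : ∀ x ∉ insert 0 A, f x = 0) :
    2 * piC ω 0 * (1 - returnProb ω) ≤ energy ω T f := by
  have hret := returnProb_le_one hω hd
  have hhit : (hitProb (pC ω) A 0).toReal ≤ (returnProb ω).toReal := by
    refine ENNReal.toReal_mono (ne_top_of_le_ne_top ENNReal.one_ne_top hret) ?_
    rw [returnProb_eq_hitProb]
    exact hitProb_mono (fun x hx => ne_of_mem_of_not_mem hx h0A) 0
  have hlhs : 2 * piC ω 0 * (1 - returnProb ω) ≠ ∞ :=
    ENNReal.mul_ne_top (ENNReal.mul_ne_top ENNReal.ofNat_ne_top (piC_ne_top hω 0))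
      (ENNReal.sub_ne_top ENNReal.one_ne_top)
  rw [← ENNReal.toReal_le_toReal hlhs (energy_ne_top T f), energy_toReal, ENNReal.toReal_mul,
    ENNReal.toReal_mul, ENNReal.toReal_sub_of_le hret ENNReal.one_ne_top, ENNReal.toReal_one,
    ENNReal.toReal_ofNat]
  refine le_trans ?_ (two_mul_piC_mul_sub_hitProb_le_dirichletForm hω hd h0A h0T hT hf0 hf)
  gcongr

end Escape

lemma returnProb_eq_one_of_liminf_energy {ω : EnvC d} (hω : IsCondEnv ω) (hd : 0 < d)
    (h : liminf (fun R => energy ω (cube d (R + 1)) (harmonicProfile R)) atTop = 0) :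
    returnProb ω = 1 := by
  have hbox (R : ℕ) (hR : R ≠ 0) :
      2 * piC ω 0 * (1 - returnProb ω) ≤ energy ω (cube d (R + 1)) (harmonicProfile R) := by
    have hins : insert 0 ((cube d R).erase 0) = cube d R := insert_erase (zero_mem_cube d R)
    refine two_mul_piC_mul_sub_returnProb_le_energy hω hd (notMem_erase 0 _) (zero_mem_cube d _)
      (fun x hx => nbr_subset_cube (hins ▸ hx)) (harmonicProfile_zero R) fun x hx => ?_
    rw [hins, mem_cube, not_le] at hx
    exact harmonicProfile_eq_zero hR hx.le
  have hesc : 2 * piC ω 0 * (1 - returnProb ω) = 0 :=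
    nonpos_iff_eq_zero.mp (h ▸ le_liminf_of_le (by isBoundedDefault)
      ((eventually_ne_atTop 0).mono hbox))
  have hsub : 1 - returnProb ω = 0 := by
    simpa [(piC_pos hω hd 0).ne'] using hesc
  exact le_antisymm (returnProb_le_one hω hd) (tsub_eq_zero_iff_le.mp hsub)

lemma measurable_energy (T : Finset (Zd d)) (f : Zd d → ℝ) :
    Measurable fun ω : EnvC d => energy ω T f := by
  unfold energy
  fun_prop

lemma lintegral_energy_le {P : Measure (EnvC d)} (hcond : ∀ᵐ ω ∂P, IsCondEnv ω)
    {C : ℝ≥0∞}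
    (hC : ∀ x y : Zd d, znorm (x - y) = 1 → ∫⁻ ω, (ω (x, y) : ℝ≥0∞) ∂P ≤ C)
    (T : Finset (Zd d)) (f : Zd d → ℝ) :
    ∫⁻ ω, energy ω T f ∂P
      ≤ C * ENNReal.ofReal (∑ x ∈ T, ∑ y ∈ nbr x, (f x - f y) ^ 2) := by
  have hmeas (x y : Zd d) : Measurable fun ω : EnvC d => (ω (x, y) : ℝ≥0∞) := by fun_prop
  have hzero (x y : Zd d) (hy : y ∉ nbr x) : ∫⁻ ω, (ω (x, y) : ℝ≥0∞) ∂P = 0 :=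
    (lintegral_congr_ae (hcond.mono fun ω hω => by
      simp [omega_eq_zero_of_notMem_nbr hω hy])).trans lintegral_zero
  simp only [energy]
  rw [lintegral_finsetSum _ fun x _ => by fun_prop]
  simp only [lintegral_finsetSum _ fun y _ => (hmeas _ y).mul_const _,
    lintegral_mul_const _ (hmeas _ _)]
  rw [ENNReal.ofReal_sum_of_nonneg fun x _ => sum_nonneg fun y _ => sq_nonneg _, mul_sum]
  refine sum_le_sum fun x _ => ?_
  rw [ENNReal.ofReal_sum_of_nonneg fun y _ => sq_nonneg _, mul_sum,
    ← sum_filter_of_ne fun y _ hne => by_contra fun hy => hne (by rw [hzero x y hy, zero_mul])]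
  refine (sum_le_sum_of_subset (fun y hy => (mem_filter.mp hy).2)).trans
    (sum_le_sum fun y hy => ?_)
  exact mul_le_mul_left (hC x y (mem_nbr.mp hy)) _

lemma tendsto_lintegral_energy_harmonicProfile (hd : d = 1 ∨ d = 2) {P : Measure (EnvC d)}
    (hcond : ∀ᵐ ω ∂P, IsCondEnv ω) {C : ℝ≥0∞} (hCtop : C ≠ ∞)
    (hC : ∀ x y : Zd d, znorm (x - y) = 1 → ∫⁻ ω, (ω (x, y) : ℝ≥0∞) ∂P ≤ C) :
    Tendsto (fun R => ∫⁻ ω, energy ω (cube d (R + 1)) (harmonicProfile R) ∂P)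
      atTop (𝓝 0) := by
  have hlim : Tendsto (fun R => C * ENNReal.ofReal (288 * (harmonic (R + 2) / harmonic R ^ 2)))
      atTop (𝓝 0) := by
    simpa using ENNReal.Tendsto.const_mul
      (ENNReal.tendsto_ofReal (tendsto_harmonic_add_two_div_sq.const_mul 288)) (Or.inr hCtop)
  refine tendsto_of_tendsto_of_tendsto_of_le_of_le tendsto_const_nhds hlim (fun _ => zero_le)
    fun R => (lintegral_energy_le hcond hC _ _).trans ?_
  gcongr
  exact sum_sum_nbr_sq_harmonicProfile_sub_le hd R

end RandomConductance

theorem stmt4_general (d : ℕ) (hd : d = 1 ∨ d = 2) (P : Measure (EnvC d))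
    (hcond : ∀ᵐ ω ∂P, IsCondEnv ω)
    (hsup : ∃ C : ℝ≥0∞, C < ∞ ∧ ∀ x y : Zd d, znorm (x - y) = 1 →
      ∫⁻ ω, (ω (x, y) : ℝ≥0∞) ∂P ≤ C) :
    ∀ᵐ ω ∂P, returnProb ω = 1 := by
  obtain ⟨C, hC, hbound⟩ := hsup
  have hlim := ae_liminf_eq_zero_of_tendsto_lintegral
    (fun R => RandomConductance.measurable_energy _ _)
    (RandomConductance.tendsto_lintegral_energy_harmonicProfile hd hcond hC.ne hbound)
  filter_upwards [hcond, hlim] with ω hω hω_lim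
  exact RandomConductance.returnProb_eq_one_of_liminf_energy hω (by omega) hω_lim

theorem stmt4 (d : ℕ) (hd : d = 1 ∨ d = 2) (P : Measure (EnvC d)) [IsProbabilityMeasure P]
    (hcond : ∀ᵐ ω ∂P, IsCondEnv ω)
    (hsup : ∃ C : ℝ≥0∞, C < ∞ ∧ ∀ x y : Zd d, znorm (x - y) = 1 →
      ∫⁻ ω, (ω (x, y) : ℝ≥0∞) ∂P ≤ C) :
    ∀ᵐ ω ∂P, returnProb ω = 1 :=
  stmt4_general d hd P hcond hsup
end
end
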